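/- arXiv:1506.01329 — 4 statements merged into one kernel-verified Lean document; each statement's English description precedes it below -/
import Mathlib

section
/- Let ψ be the Lévy characteristic with drift b, diffusion σ², Poisson intensity λ and jump measure r. If (f_j) is a sequence of real-valued Schwartz functions on ℝ^d converging to a real-valued Schwartz function f in the topology of the Schwartz space (i.e., all Schwartz seminorms of f_j − f tend to 0), then ∫_{ℝ^d} ψ(f_j(x)) dx → ∫_{ℝ^d} ψ(f(x)) dx. In particular, the characteristic functional C_η(f) = exp(∫_{ℝ^d} ψ(f(x)) dx) is sequentially continuous on the real Schwartz space. -/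
/-!
The Lévy characteristic is locally Lipschitz with a linearly growing constant:
`‖ψ t - ψ u‖ ≤ (|b| + |λ| m₁ + |σ²|/2 (|t| + |u|)) |t - u|`, where `m₁ = ∫ |s| dr`
bounds the Lipschitz constant of the jump part because `|e^{ia} - e^{ic}| ≤ |a - c|`.
Writing that constant as `a + c (|t| + |u|)`, integration gives
`‖∫ ψ ∘ g - ∫ ψ ∘ g₀‖ ≤ (a + c (‖g‖_∞ + ‖g₀‖_∞)) ‖g - g₀‖_{L¹}`,
and the sup norm and the `L¹` norm are continuous on the Schwartz space, so `g ↦ ∫ ψ ∘ g`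
is continuous there; convergence of all Schwartz seminorms is convergence in that topology.
-/

open MeasureTheory Filter Topology

/-- The Lévy characteristic with drift `b`, diffusion `σ2`, Poisson intensity `lam`
and jump measure `r`. -/
noncomputable def levyChar (b σ2 lam : ℝ) (r : Measure ℝ) (t : ℝ) : ℂ :=
  Complex.I * (b : ℂ) * (t : ℂ) - ((σ2 / 2 : ℝ) : ℂ) * (t : ℂ) ^ 2
    + (lam : ℂ) * ∫ s : ℝ, (Complex.exp (Complex.I * (s : ℂ) * (t : ℂ)) - 1) ∂r

theorem Complex.norm_exp_I_mul_ofReal_sub_exp_I_mul_ofReal_le (a c : ℝ) :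
    ‖exp (I * a) - exp (I * c)‖ ≤ |a - c| := by
  have hfactor : exp (I * a) - exp (I * c) = exp (I * c) * (exp (I * ↑(a - c)) - 1) := by
    rw [mul_sub, ← exp_add]; push_cast; ring_nf
  rw [hfactor, norm_mul, norm_exp_I_mul_ofReal, one_mul, ← Real.norm_eq_abs]
  exact Real.norm_exp_I_mul_ofReal_sub_one_le

theorem levyChar_zero (b σ2 lam : ℝ) (r : Measure ℝ) : levyChar b σ2 lam r 0 = 0 := by
  simp [levyChar]

section LipschitzBounds

open Complex

variable {r : Measure ℝ} [IsFiniteMeasure r]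

theorem integrable_cexp_I_mul_mul_sub_one (t : ℝ) :
    Integrable (fun s : ℝ => exp (I * s * t) - 1) r := by
  refine (integrable_const (2 : ℝ)).mono' (by fun_prop) (ae_of_all _ fun s => ?_)
  have hunit : ‖exp (I * s * t)‖ = 1 := by
    rw [show I * s * t = I * ↑(s * t) by push_cast; ring, norm_exp_I_mul_ofReal]
  calc ‖exp (I * s * t) - 1‖ ≤ ‖exp (I * s * t)‖ + ‖(1 : ℂ)‖ := norm_sub_le _ _
    _ = 2 := by rw [hunit, norm_one]; norm_num

theorem norm_integral_cexp_sub_one_sub_le (hr₁ : Integrable (fun s : ℝ => |s|) r) (t u : ℝ) :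
    ‖(∫ s, (exp (I * s * t) - 1) ∂r) - ∫ s, (exp (I * s * u) - 1) ∂r‖
      ≤ (∫ s, |s| ∂r) * |t - u| := by
  have hpointwise : ∀ s : ℝ,
      ‖(exp (I * s * t) - 1) - (exp (I * s * u) - 1)‖ ≤ |s| * |t - u| := fun s => by
    rw [sub_sub_sub_cancel_right, ← abs_mul, mul_sub,
      show I * s * t = I * ↑(s * t) by push_cast; ring,
      show I * s * u = I * ↑(s * u) by push_cast; ring]
    exact norm_exp_I_mul_ofReal_sub_exp_I_mul_ofReal_le _ _
  rw [← integral_sub (integrable_cexp_I_mul_mul_sub_one t) (integrable_cexp_I_mul_mul_sub_one u),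
    ← integral_mul_const]
  exact norm_integral_le_of_norm_le (hr₁.mul_const _) (ae_of_all _ hpointwise)

theorem norm_levyChar_sub_le (b σ2 lam : ℝ)
    (hr₁ : Integrable (fun s : ℝ => |s|) r) (t u : ℝ) :
    ‖levyChar b σ2 lam r t - levyChar b σ2 lam r u‖
      ≤ (|b| + |lam| * ∫ s, |s| ∂r + |σ2| / 2 * (|t| + |u|)) * |t - u| := by
  set J : ℝ → ℂ := fun t => ∫ s : ℝ, (exp (I * s * t) - 1) ∂r
  have hsplit : levyChar b σ2 lam r t - levyChar b σ2 lam r u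
      = I * b * ↑(t - u) - ↑(σ2 / 2) * ↑((t + u) * (t - u)) + lam * (J t - J u) := by
    simp only [levyChar, J]; push_cast; ring
  have hdrift : ‖I * b * ↑(t - u)‖ = |b| * |t - u| := by
    simp only [norm_mul, Complex.norm_I, Complex.norm_real, Real.norm_eq_abs, one_mul]
  have hdiffusion :
      ‖(↑(σ2 / 2) : ℂ) * ↑((t + u) * (t - u))‖ ≤ |σ2| / 2 * (|t| + |u|) * |t - u| := by
    rw [norm_mul, Complex.norm_real, Complex.norm_real, Real.norm_eq_abs, Real.norm_eq_abs,
      abs_div, abs_two, abs_mul, ← mul_assoc]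
    gcongr
    exact abs_add_le t u
  have hjump : ‖(lam : ℂ) * (J t - J u)‖ ≤ |lam| * ((∫ s, |s| ∂r) * |t - u|) := by
    rw [norm_mul, Complex.norm_real, Real.norm_eq_abs]
    exact mul_le_mul_of_nonneg_left (norm_integral_cexp_sub_one_sub_le hr₁ t u) (abs_nonneg _)
  calc ‖levyChar b σ2 lam r t - levyChar b σ2 lam r u‖
      ≤ ‖I * b * ↑(t - u)‖ + ‖(↑(σ2 / 2) : ℂ) * ↑((t + u) * (t - u))‖
        + ‖(lam : ℂ) * (J t - J u)‖ := by
        rw [hsplit]; exact (norm_add_le _ _).trans (add_le_add_left (norm_sub_le _ _) _)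
    _ ≤ _ := by rw [hdrift]; nlinarith [hdiffusion, hjump]

end LipschitzBounds

theorem continuous_of_norm_sub_le_mul_abs_sub {F : Type*} [NormedAddCommGroup F] {φ : ℝ → F}
    {a c : ℝ} (hφ : ∀ t u, ‖φ t - φ u‖ ≤ (a + c * (|t| + |u|)) * |t - u|) : Continuous φ := by
  refine continuous_iff_continuousAt.2 fun u => tendsto_iff_norm_sub_tendsto_zero.2 ?_
  have hbound : Continuous fun t => (a + c * (|t| + |u|)) * |t - u| := by fun_prop
  exact squeeze_zero (fun _ => norm_nonneg _) (fun t => hφ t u) (by simpa using hbound.tendsto u)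

section SchwartzComposition

open scoped SchwartzMap

variable {E F : Type*} [NormedAddCommGroup E] [NormedSpace ℝ E] [MeasurableSpace E] [BorelSpace E]
  [NormedAddCommGroup F] {μ : Measure E} [μ.HasTemperateGrowth]
  {φ : ℝ → F} {a c : ℝ}

theorem integrable_comp_schwartzMap (hc : 0 ≤ c)
    (hφ : ∀ t u, ‖φ t - φ u‖ ≤ (a + c * (|t| + |u|)) * |t - u|) (hφ0 : φ 0 = 0)
    (g : 𝓢(E, ℝ)) : Integrable (fun x => φ (g x)) μ := by
  have hmeas : AEStronglyMeasurable (fun x => φ (g x)) μ :=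
    ((continuous_of_norm_sub_le_mul_abs_sub hφ).stronglyMeasurable.comp_measurable
      g.continuous.measurable).aestronglyMeasurable
  refine (memLp_one_iff_integrable.1 (g.memLp 1 μ)).norm.const_mul
    (a + c * SchwartzMap.seminorm ℝ 0 0 g) |>.mono' hmeas (ae_of_all _ fun x => ?_)
  have hgx : |g x| ≤ SchwartzMap.seminorm ℝ 0 0 g := g.norm_le_seminorm ℝ x
  calc ‖φ (g x)‖ = ‖φ (g x) - φ 0‖ := by rw [hφ0, sub_zero]
    _ ≤ (a + c * (|g x| + |0|)) * |g x - 0| := hφ _ _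
    _ ≤ (a + c * SchwartzMap.seminorm ℝ 0 0 g) * ‖g x‖ := by
        rw [abs_zero, add_zero, sub_zero, Real.norm_eq_abs]
        gcongr

theorem norm_integral_comp_schwartzMap_sub_le [NormedSpace ℝ F] (hc : 0 ≤ c)
    (hφ : ∀ t u, ‖φ t - φ u‖ ≤ (a + c * (|t| + |u|)) * |t - u|) (hφ0 : φ 0 = 0)
    (g g₀ : 𝓢(E, ℝ)) :
    ‖∫ x, φ (g x) ∂μ - ∫ x, φ (g₀ x) ∂μ‖
      ≤ (a + c * (SchwartzMap.seminorm ℝ 0 0 g + SchwartzMap.seminorm ℝ 0 0 g₀))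
        * ‖(g - g₀).toLp 1 μ‖ := by
  rw [SchwartzMap.norm_toLp_one, ← integral_const_mul,
    ← integral_sub (integrable_comp_schwartzMap hc hφ hφ0 g)
      (integrable_comp_schwartzMap hc hφ hφ0 g₀)]
  refine norm_integral_le_of_norm_le
    ((memLp_one_iff_integrable.1 ((g - g₀).memLp 1 μ)).norm.const_mul _) (ae_of_all _ fun x => ?_)
  calc ‖φ (g x) - φ (g₀ x)‖ ≤ (a + c * (|g x| + |g₀ x|)) * |g x - g₀ x| := hφ _ _
    _ ≤ _ := by
        rw [sub_apply, Real.norm_eq_abs]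
        gcongr
        · exact g.norm_le_seminorm ℝ x
        · exact g₀.norm_le_seminorm ℝ x

theorem continuous_integral_comp_schwartzMap [NormedSpace ℝ F] (hc : 0 ≤ c)
    (hφ : ∀ t u, ‖φ t - φ u‖ ≤ (a + c * (|t| + |u|)) * |t - u|) (hφ0 : φ 0 = 0) :
    Continuous (fun g : 𝓢(E, ℝ) => ∫ x, φ (g x) ∂μ) := by
  refine continuous_iff_continuousAt.2 fun g₀ => tendsto_iff_norm_sub_tendsto_zero.2 ?_
  have hseminorm : Continuous (SchwartzMap.seminorm ℝ 0 0 : 𝓢(E, ℝ) → ℝ) :=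
    (schwartz_withSeminorms ℝ E ℝ).continuous_seminorm (0, 0)
  have hbound : Continuous fun g : 𝓢(E, ℝ) =>
      (a + c * (SchwartzMap.seminorm ℝ 0 0 g + SchwartzMap.seminorm ℝ 0 0 g₀))
        * ‖(g - g₀).toLp 1 μ‖ := by
    fun_prop
  refine squeeze_zero (fun _ => norm_nonneg _)
    (fun g => norm_integral_comp_schwartzMap_sub_le hc hφ hφ0 g g₀) ?_
  simpa [SchwartzMap.norm_toLp_one] using hbound.tendsto g₀

end SchwartzComposition

theorem charFunctional_sequentially_continuous_general
    (b σ2 lam : ℝ)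
    (r : Measure ℝ) [IsProbabilityMeasure r]
    (hmom : ∀ n : ℕ, Integrable (fun s : ℝ => |s| ^ n) r)
    (d : ℕ)
    (f : ℕ → SchwartzMap (EuclideanSpace ℝ (Fin d)) ℝ)
    (f₀ : SchwartzMap (EuclideanSpace ℝ (Fin d)) ℝ)
    (hconv : ∀ k n : ℕ,
      Tendsto (fun j => SchwartzMap.seminorm ℝ k n (f j - f₀)) atTop (𝓝 0)) :
    Tendsto (fun j => ∫ x, levyChar b σ2 lam r (f j x)) atTop
        (𝓝 (∫ x, levyChar b σ2 lam r (f₀ x))) ∧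
    Tendsto (fun j => Complex.exp (∫ x, levyChar b σ2 lam r (f j x))) atTop
        (𝓝 (Complex.exp (∫ x, levyChar b σ2 lam r (f₀ x)))) := by
  have hf : Tendsto f atTop (𝓝 f₀) :=
    ((schwartz_withSeminorms ℝ _ ℝ).tendsto_nhds f f₀).2 fun i _ hε =>
      (hconv i.1 i.2).eventually (gt_mem_nhds hε)
  have habs : Integrable (fun s : ℝ => |s|) r := by simpa using hmom 1
  have hcont := continuous_integral_comp_schwartzMap
    (μ := (volume : Measure (EuclideanSpace ℝ (Fin d)))) (c := |σ2| / 2) (by positivity)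
    (norm_levyChar_sub_le b σ2 lam habs) (levyChar_zero b σ2 lam r)
  have hlim := (hcont.tendsto f₀).comp hf
  exact ⟨hlim, (Complex.continuous_exp.tendsto _).comp hlim⟩

theorem charFunctional_sequentially_continuous
    (b σ2 lam : ℝ) (hσ : 0 ≤ σ2) (hlam : 0 ≤ lam)
    (r : Measure ℝ) [IsProbabilityMeasure r] (hr0 : r {0} = 0)
    (hmom : ∀ n : ℕ, Integrable (fun s : ℝ => |s| ^ n) r)
    (d : ℕ) (hd : 1 ≤ d)
    (f : ℕ → SchwartzMap (EuclideanSpace ℝ (Fin d)) ℝ)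
    (f₀ : SchwartzMap (EuclideanSpace ℝ (Fin d)) ℝ)
    (hconv : ∀ k n : ℕ,
      Tendsto (fun j => SchwartzMap.seminorm ℝ k n (f j - f₀)) atTop (𝓝 0)) :
    Tendsto (fun j => ∫ x, levyChar b σ2 lam r (f j x)) atTop
        (𝓝 (∫ x, levyChar b σ2 lam r (f₀ x))) ∧
    Tendsto (fun j => Complex.exp (∫ x, levyChar b σ2 lam r (f j x))) atTop
        (𝓝 (Complex.exp (∫ x, levyChar b σ2 lam r (f₀ x)))) :=
  charFunctional_sequentially_continuous_general b σ2 lam r hmom d f f₀ hconv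
end

section
/- Let ψ be the Lévy characteristic with drift b, diffusion σ², Poisson intensity λ and jump measure r, and let C_η(f) = exp(∫_{ℝ^d} ψ(f(x)) dx) for real-valued Schwartz f on ℝ^d. Then C_η is positive definite on the real Schwartz space: for every N ∈ ℕ, all real-valued Schwartz functions f_1, …, f_N on ℝ^d and all complex numbers c_1, …, c_N, the sum Σ_{j=1}^N Σ_{l=1}^N c_j · conj(c_l) · C_η(f_j − f_l) is a nonnegative real number. -/
/-!
Write `ψ(a - c) = ψ(a) + conj ψ(c) + k(a, c)`: the drift cancels and
`k(a, c) = σ² a c + λ ∫ (e^{isa} - 1) conj (e^{isc} - 1) dr(s)` is a positive semidefinite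
kernel, a sum of Gram kernels. Integrating over `x` gives
`C_η(f_j - f_l) = v_j conj v_l exp K_{jl}` with `v_j = exp ∫ ψ(f_j)` and
`K_{jl} = ∫ k(f_j, f_l)`; `K` is positive semidefinite as an integral of positive semidefinite
matrices. By the Schur product theorem every entrywise power of `K`, hence its entrywise
exponential, is positive semidefinite, and so is its Hadamard product with the rank-one
matrix `v v*`.
-/

open MeasureTheory Filter Topology ComplexOrder

/-- The characteristic functional of generalized white noise,
`C_η(f) = exp (∫ ψ(f(x)) dx)`. -/
noncomputable def charFunctional (b σ2 lam : ℝ) (r : Measure ℝ) (d : ℕ)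
    (f : SchwartzMap (EuclideanSpace ℝ (Fin d)) ℝ) : ℂ :=
  Complex.exp (∫ x, levyChar b σ2 lam r (f x))

open Complex Matrix
open scoped Nat SchwartzMap

theorem MeasureTheory.Integrable.conj {α 𝕜 : Type*} [RCLike 𝕜] [MeasurableSpace α]
    {μ : Measure α} {f : α → 𝕜} (hf : Integrable f μ) :
    Integrable (fun x => starRingEnd 𝕜 (f x)) μ :=
  memLp_one_iff_integrable.1 (memLp_one_iff_integrable.2 hf).star

namespace Matrix

variable {n 𝕜 : Type*} [Fintype n] [RCLike 𝕜]

theorem PosSemidef.sum_sum_mul_conj_mul_nonneg {A : Matrix n n 𝕜} (hA : A.PosSemidef)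
    (c : n → 𝕜) : 0 ≤ ∑ j, ∑ l, c j * starRingEnd 𝕜 (c l) * A j l := by
  convert hA.dotProduct_mulVec_nonneg (star c) using 1
  simp only [dotProduct, mulVec, Pi.star_apply, Finset.mul_sum, RCLike.star_def,
    starRingEnd_self_apply]
  exact Finset.sum_congr rfl fun j _ => Finset.sum_congr rfl fun l _ => by ring

theorem PosSemidef.map_pow {A : Matrix n n 𝕜} (hA : A.PosSemidef) (k : ℕ) :
    (A.map (· ^ k)).PosSemidef := by
  induction k with
  | zero =>
    convert posSemidef_vecMulVec_self_star (1 : n → 𝕜) using 1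
    ext i j
    simp [vecMulVec_apply]
  | succ k ih =>
    convert ih.hadamard hA using 1
    ext i j
    simp [hadamard_apply, pow_succ]

theorem posSemidef_integral {α : Type*} [MeasurableSpace α] {μ : Measure α}
    {B : α → Matrix n n 𝕜} (hB : ∀ᵐ a ∂μ, (B a).PosSemidef)
    (hint : ∀ i j, Integrable (fun a => B a i j) μ) :
    (of fun i j => ∫ a, B a i j ∂μ).PosSemidef := by
  refine .of_dotProduct_mulVec_nonneg ?_ fun x => ?_
  · ext i j
    simp only [conjTranspose_apply, of_apply, RCLike.star_def, ← integral_conj]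
    refine integral_congr_ae ?_
    filter_upwards [hB] with a ha
    exact congrFun (congrFun ha.isHermitian i) j
  · have hform : star x ⬝ᵥ (of fun i j => ∫ a, B a i j ∂μ) *ᵥ x
        = ∫ a, star x ⬝ᵥ B a *ᵥ x ∂μ := by
      simp only [dotProduct, mulVec, of_apply]
      rw [integral_finsetSum _ fun i _ =>
        (integrable_finsetSum _ fun j _ => (hint i j).mul_const _).const_mul _]
      refine Finset.sum_congr rfl fun i _ => ?_
      rw [integral_const_mul, integral_finsetSum _ fun j _ => (hint i j).mul_const _]
      simp only [integral_mul_const]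
    rw [hform]
    exact integral_nonneg_of_ae (hB.mono fun a ha => ha.dotProduct_mulVec_nonneg x)

theorem PosSemidef.map_exp {A : Matrix n n ℂ} (hA : A.PosSemidef) :
    (A.map exp).PosSemidef := by
  refine .of_dotProduct_mulVec_nonneg (hA.isHermitian.map _ Complex.exp_conj) fun x => ?_
  have hseries : HasSum (fun k : ℕ => (k ! : ℂ)⁻¹ * (star x ⬝ᵥ A.map (· ^ k) *ᵥ x))
      (star x ⬝ᵥ A.map exp *ᵥ x) := by
    simp only [dotProduct, mulVec, map_apply, Finset.mul_sum]
    refine hasSum_sum fun i _ => hasSum_sum fun j _ => ?_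
    have hexp := NormedSpace.expSeries_div_hasSum_exp (A i j)
    rw [← exp_eq_exp_ℂ] at hexp
    rw [← mul_assoc]
    exact ((hexp.mul_left (star x i)).mul_right (x j)).congr_fun fun k => by ring
  exact hseries.nonneg fun k => mul_nonneg (by positivity)
    ((hA.map_pow k).dotProduct_mulVec_nonneg x)

end Matrix

theorem norm_exp_I_mul_mul_sub_one_le (s t : ℝ) :
    ‖exp (I * s * t) - 1‖ ≤ |s| * |t| := by
  have h := Real.norm_exp_I_mul_ofReal_sub_one_le (x := s * t)
  rwa [ofReal_mul, ← mul_assoc, Real.norm_eq_abs, abs_mul] at h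

theorem norm_exp_I_mul_mul_sub_one_le_two (s t : ℝ) : ‖exp (I * s * t) - 1‖ ≤ 2 := by
  calc ‖exp (I * s * t) - 1‖ ≤ ‖exp (I * s * t)‖ + ‖(1 : ℂ)‖ := norm_sub_le _ _
    _ = 2 := by
      rw [mul_assoc, ← ofReal_mul, norm_exp_I_mul_ofReal, norm_one]
      norm_num

theorem exp_I_mul_mul_sub_one_mul_conj (s a c : ℝ) :
    exp (I * s * ↑(a - c)) - 1 - (exp (I * s * a) - 1) - starRingEnd ℂ (exp (I * s * c) - 1)
      = (exp (I * s * a) - 1) * starRingEnd ℂ (exp (I * s * c) - 1) := by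
  have hconj : starRingEnd ℂ (exp (I * s * c)) = exp (-(I * s * c)) := by
    rw [← exp_conj]
    simp
  have hsub : exp (I * s * ↑(a - c)) = exp (I * s * a) * exp (-(I * s * c)) := by
    rw [← exp_add]
    push_cast
    ring_nf
  rw [map_sub, map_one, hconj, hsub]
  ring

section Levy

variable {b σ2 lam : ℝ} {r : Measure ℝ}

theorem integrable_exp_I_mul_mul_sub_one [IsFiniteMeasure r] (t : ℝ) :
    Integrable (fun s : ℝ => exp (I * s * t) - 1) r :=
  .of_bound (by fun_prop) 2 (ae_of_all _ fun s => norm_exp_I_mul_mul_sub_one_le_two s t)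

theorem continuous_levyChar [IsFiniteMeasure r] : Continuous (levyChar b σ2 lam r) := by
  have hjump : Continuous fun t : ℝ => ∫ s, (exp (I * s * t) - 1) ∂r :=
    continuous_of_dominated (fun t => (integrable_exp_I_mul_mul_sub_one t).aestronglyMeasurable)
      (fun t => ae_of_all _ fun s => norm_exp_I_mul_mul_sub_one_le_two s t)
      (integrable_const 2) (ae_of_all _ fun s => by fun_prop)
  unfold levyChar
  fun_prop

theorem norm_levyChar_le (hr : Integrable (fun s => |s|) r) (t : ℝ) :
    ‖levyChar b σ2 lam r t‖ ≤ (|b| + |lam| * ∫ s, |s| ∂r) * |t| + |σ2| / 2 * t ^ 2 := by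
  have hjump : ‖∫ s, (exp (I * s * t) - 1) ∂r‖ ≤ (∫ s, |s| ∂r) * |t| := by
    rw [← integral_mul_const]
    exact norm_integral_le_of_norm_le (hr.mul_const _)
      (ae_of_all _ fun s => norm_exp_I_mul_mul_sub_one_le s t)
  unfold levyChar
  calc _ ≤ ‖I * b * t‖ + ‖((σ2 / 2 : ℝ) : ℂ) * (t : ℂ) ^ 2‖
        + ‖(lam : ℂ) * ∫ s, (exp (I * s * t) - 1) ∂r‖ :=
        (norm_add_le _ _).trans (by gcongr; exact norm_sub_le _ _)
    _ ≤ |b| * |t| + |σ2| / 2 * t ^ 2 + |lam| * ((∫ s, |s| ∂r) * |t|) := by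
      simp only [norm_mul, norm_I, norm_pow, norm_real, Real.norm_eq_abs, one_mul, abs_div,
        abs_two, sq_abs]
      gcongr
    _ = _ := by ring

theorem integrable_levyChar_comp [IsFiniteMeasure r] (hr : Integrable (fun s => |s|) r)
    {α : Type*} [MeasurableSpace α] {μ : Measure α} {f : α → ℝ} (hf : Integrable f μ)
    (hf2 : MemLp f 2 μ) : Integrable (fun x => levyChar b σ2 lam r (f x)) μ :=
  ((hf.abs.const_mul _).add (hf2.integrable_sq.const_mul _)).mono'
    (continuous_levyChar.comp_aestronglyMeasurable hf.aestronglyMeasurable)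
    (ae_of_all _ fun x => norm_levyChar_le hr (f x))

variable (b σ2 lam r) in
noncomputable def levyKernel (a c : ℝ) : ℂ :=
  levyChar b σ2 lam r (a - c) - levyChar b σ2 lam r a - starRingEnd ℂ (levyChar b σ2 lam r c)

theorem levyKernel_eq [IsFiniteMeasure r] (a c : ℝ) :
    levyKernel b σ2 lam r a c = σ2 * a * c
      + lam * ∫ s, (exp (I * s * a) - 1) * starRingEnd ℂ (exp (I * s * c) - 1) ∂r := by
  have hjump : ∫ s, (exp (I * s * ↑(a - c)) - 1) ∂r - ∫ s, (exp (I * s * a) - 1) ∂r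
      - starRingEnd ℂ (∫ s, (exp (I * s * c) - 1) ∂r)
      = ∫ s, (exp (I * s * a) - 1) * starRingEnd ℂ (exp (I * s * c) - 1) ∂r := by
    have hexp := integrable_exp_I_mul_mul_sub_one (r := r)
    rw [← integral_conj, ← integral_sub (hexp _) (hexp _), ← integral_sub ?_ (hexp c).conj]
    · simp only [exp_I_mul_mul_sub_one_mul_conj]
    · exact (hexp _).sub (hexp _)
  rw [levyKernel, levyChar, levyChar, levyChar, ← hjump]
  simp only [map_add, map_sub, map_mul, map_pow, conj_I, conj_ofReal]
  push_cast
  ring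

theorem posSemidef_levyKernel [IsFiniteMeasure r] (hσ : 0 ≤ σ2) (hlam : 0 ≤ lam)
    {n : Type*} [Fintype n] (a : n → ℝ) :
    (of fun j l => levyKernel b σ2 lam r (a j) (a l)).PosSemidef := by
  set h : ℝ → n → ℂ := fun s j => exp (I * s * a j) - 1
  have hdiffusion := posSemidef_vecMulVec_self_star fun j => (a j : ℂ)
  have hjump : (of fun j l => ∫ s, h s j * starRingEnd ℂ (h s l) ∂r).PosSemidef := by
    refine posSemidef_integral (ae_of_all _ fun s => posSemidef_vecMulVec_self_star (h s))
      fun j l => .of_bound (by fun_prop) 4 (ae_of_all _ fun s => ?_)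
    simp only [norm_mul, RCLike.norm_conj]
    nlinarith [norm_exp_I_mul_mul_sub_one_le_two s (a j),
      norm_exp_I_mul_mul_sub_one_le_two s (a l), norm_nonneg (h s j), norm_nonneg (h s l)]
  convert (hdiffusion.smul hσ).add (hjump.smul hlam) using 1
  ext j l
  simp [levyKernel_eq, vecMulVec_apply, h]
  ring

end Levy

section Schwartz

variable {b σ2 lam : ℝ} {r : Measure ℝ} [IsFiniteMeasure r]
variable {D : Type*} [NormedAddCommGroup D] [NormedSpace ℝ D] [MeasurableSpace D] [BorelSpace D]
  [SecondCountableTopology D] {μ : Measure D} [μ.HasTemperateGrowth]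

theorem SchwartzMap.integrable_levyChar_comp (hr : Integrable (fun s => |s|) r) (f : 𝓢(D, ℝ)) :
    Integrable (fun x => levyChar b σ2 lam r (f x)) μ :=
  _root_.integrable_levyChar_comp hr f.integrable (f.memLp 2 μ)

theorem SchwartzMap.integrable_levyKernel_comp (hr : Integrable (fun s => |s|) r)
    (f g : 𝓢(D, ℝ)) : Integrable (fun x => levyKernel b σ2 lam r (f x) (g x)) μ :=
  (((f - g).integrable_levyChar_comp hr).sub (f.integrable_levyChar_comp hr)).sub
    (g.integrable_levyChar_comp hr).conj

theorem SchwartzMap.integral_levyChar_sub (hr : Integrable (fun s => |s|) r) (f g : 𝓢(D, ℝ)) :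
    ∫ x, levyChar b σ2 lam r ((f - g) x) ∂μ = ∫ x, levyChar b σ2 lam r (f x) ∂μ
      + starRingEnd ℂ (∫ x, levyChar b σ2 lam r (g x) ∂μ)
      + ∫ x, levyKernel b σ2 lam r (f x) (g x) ∂μ := by
  rw [← integral_conj, ← integral_add (f.integrable_levyChar_comp hr)
    (g.integrable_levyChar_comp hr).conj, ← integral_add _ (f.integrable_levyKernel_comp hr g)]
  · simp [levyKernel]
  · exact (f.integrable_levyChar_comp hr).add (g.integrable_levyChar_comp hr).conj

end Schwartz

theorem charFunctional_sub {b σ2 lam : ℝ} {r : Measure ℝ} [IsFiniteMeasure r]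
    (hr : Integrable (fun s => |s|) r) {d : ℕ} (f g : 𝓢(EuclideanSpace ℝ (Fin d), ℝ)) :
    charFunctional b σ2 lam r d (f - g) = exp (∫ x, levyChar b σ2 lam r (f x))
      * starRingEnd ℂ (exp (∫ x, levyChar b σ2 lam r (g x)))
      * exp (∫ x, levyKernel b σ2 lam r (f x) (g x)) := by
  rw [charFunctional, SchwartzMap.integral_levyChar_sub hr, exp_add, exp_add, exp_conj]

theorem charFunctional_positive_definite_general
    (b σ2 lam : ℝ) (hσ : 0 ≤ σ2) (hlam : 0 ≤ lam)
    (r : Measure ℝ) [IsProbabilityMeasure r]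
    (hmom : ∀ n : ℕ, Integrable (fun s : ℝ => |s| ^ n) r)
    (d : ℕ) :
    ∀ (N : ℕ) (f : Fin N → SchwartzMap (EuclideanSpace ℝ (Fin d)) ℝ)
      (c : Fin N → ℂ),
      0 ≤ ∑ j : Fin N, ∑ l : Fin N,
        c j * starRingEnd ℂ (c l) * charFunctional b σ2 lam r d (f j - f l) := by
  intro N f c
  have hr : Integrable (fun s : ℝ => |s|) r := by simpa using hmom 1
  set v : Fin N → ℂ := fun j => exp (∫ x, levyChar b σ2 lam r (f j x))
  set K : Matrix (Fin N) (Fin N) ℂ := of fun j l => ∫ x, levyKernel b σ2 lam r (f j x) (f l x)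
  have hK : K.PosSemidef :=
    posSemidef_integral (ae_of_all _ fun x => posSemidef_levyKernel hσ hlam fun j => f j x)
      fun j l => (f j).integrable_levyKernel_comp hr (f l)
  have hC : ∀ j l, charFunctional b σ2 lam r d (f j - f l)
      = (vecMulVec v (star v) ⊙ K.map exp) j l := by
    intro j l
    simp [charFunctional_sub hr, hadamard_apply, vecMulVec_apply, v, K]
  simp_rw [hC]
  exact ((posSemidef_vecMulVec_self_star v).hadamard hK.map_exp).sum_sum_mul_conj_mul_nonneg c

theorem charFunctional_positive_definite
    (b σ2 lam : ℝ) (hσ : 0 ≤ σ2) (hlam : 0 ≤ lam)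
    (r : Measure ℝ) [IsProbabilityMeasure r] (hr0 : r {0} = 0)
    (hmom : ∀ n : ℕ, Integrable (fun s : ℝ => |s| ^ n) r)
    (d : ℕ) (hd : 1 ≤ d) :
    ∀ (N : ℕ) (f : Fin N → SchwartzMap (EuclideanSpace ℝ (Fin d)) ℝ)
      (c : Fin N → ℂ),
      0 ≤ ∑ j : Fin N, ∑ l : Fin N,
        c j * starRingEnd ℂ (c l) * charFunctional b σ2 lam r d (f j - f l) :=
  charFunctional_positive_definite_general b σ2 lam hσ hlam r hmom d
end

section
/- Let ψ be the Lévy characteristic with drift b, diffusion σ², Poisson intensity λ and jump measure r, let g : ℝ^d → ℝ be a real-valued Schwartz function, and let n ≥ 3. Then the function F(t) = ∫_{ℝ^d} ψ(t·g(x)) dx is n times differentiable on ℝ and its n-th derivative at t = 0 equals i^n · λ · r_n · ∫_{ℝ^d} g(x)^n dx, where r_n = ∫_ℝ s^n dr(s). -/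
/-!
The drift and diffusion terms of `∫ ψ(t g(x)) dx` form a quadratic polynomial in `t`, which three
derivatives kill. By Fubini the jump term is `λ ∫ (exp (i a t) - 1)` over `dx ⊗ r` with
`a(x, s) = s g(x)`; all moments `|a|^(k+1)` are integrable because `g` is Schwartz and `r` has
moments of all orders, so differentiating under the integral gives the `k`-th derivative
`∫ (i a)^k exp (i a t)` for `k ≥ 1`, which at `t = 0` factors as `i^k r_k ∫ g^k`.
-/

open MeasureTheory Filter Topology

open Complex
open scoped ContDiff

section IteratedDerivFamily

variable {𝕜 : Type*} [NontriviallyNormedField 𝕜] {F : Type*} [NormedAddCommGroup F]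
  [NormedSpace 𝕜 F] {f : ℕ → 𝕜 → F}

theorem iteratedDeriv_eq_of_hasDerivAt_succ (hf : ∀ k x, HasDerivAt (f k) (f (k + 1) x) x)
    (k : ℕ) : iteratedDeriv k (f 0) = f k := by
  induction k with
  | zero => exact iteratedDeriv_zero
  | succ k ih => rw [iteratedDeriv_succ, ih]; exact funext fun x => (hf k x).deriv

theorem contDiff_of_hasDerivAt_succ (hf : ∀ k x, HasDerivAt (f k) (f (k + 1) x) x) :
    ContDiff 𝕜 ∞ (f 0) :=
  contDiff_of_differentiable_iteratedDeriv fun k _ => by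
    rw [iteratedDeriv_eq_of_hasDerivAt_succ hf]
    exact fun x => (hf k x).differentiableAt

end IteratedDerivFamily

theorem iteratedDeriv_smul_add_sq_smul_eq_zero {𝕜 : Type*} [NontriviallyNormedField 𝕜]
    {F : Type*} [NormedAddCommGroup F] [NormedSpace 𝕜 F] (α β : F) {n : ℕ} (hn : 3 ≤ n) :
    iteratedDeriv n (fun t : 𝕜 => t • α + t ^ 2 • β) = 0 := by
  funext t
  rw [iteratedDeriv_fun_add (by fun_prop) (by fun_prop), iteratedDeriv_smul_const (by fun_prop),
    iteratedDeriv_smul_const (f := fun t => t ^ 2) (by fun_prop), iteratedDeriv_fun_id,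
    iteratedDeriv_pow, Nat.descFactorial_eq_zero_iff_lt.2 (by omega)]
  simp [show n ≠ 0 by omega, show n ≠ 1 by omega]

theorem norm_I_mul_ofReal_pow_mul_cexp (u t : ℝ) (k : ℕ) :
    ‖(I * u) ^ k * cexp (I * u * t)‖ = |u| ^ k := by
  have : I * u * t = ((u * t : ℝ) : ℂ) * I := by push_cast; ring
  rw [norm_mul, this, norm_exp_ofReal_mul_I, mul_one, norm_pow, norm_mul, norm_I, one_mul,
    norm_real, Real.norm_eq_abs]

theorem norm_cexp_I_mul_ofReal_mul_sub_one_le (u t : ℝ) :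
    ‖cexp (I * u * t) - 1‖ ≤ |u| * |t| := by
  have : I * u * t = I * ((u * t : ℝ) : ℂ) := by push_cast; ring
  rw [this, ← abs_mul]
  exact Real.norm_exp_I_mul_ofReal_sub_one_le

theorem hasDerivAt_I_mul_ofReal_pow_mul_cexp_sub (u : ℝ) (k : ℕ) (c : ℂ) (t : ℝ) :
    HasDerivAt (fun t : ℝ => (I * u) ^ k * cexp (I * u * t) - c)
      ((I * u) ^ (k + 1) * cexp (I * u * t)) t := by
  have hexp : HasDerivAt (fun t : ℝ => cexp (I * u * t)) (cexp (I * u * t) * (I * u)) t := by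
    simpa using ((hasDerivAt_id (t : ℂ)).const_mul (I * u)).cexp.comp_ofReal
  exact ((hexp.const_mul ((I * u) ^ k)).sub_const c).congr_deriv (by ring)

section IntegralCexp

variable {X : Type*} [MeasurableSpace X] {μ : Measure X} {a : X → ℝ}

theorem integrable_I_mul_pow_mul_cexp (ha : Measurable a) {k : ℕ}
    (hk : Integrable (fun x => |a x| ^ k) μ) (t : ℝ) :
    Integrable (fun x => (I * a x) ^ k * cexp (I * a x * t)) μ :=
  hk.mono' (by fun_prop : Measurable _).aestronglyMeasurable
    (ae_of_all _ fun x => (norm_I_mul_ofReal_pow_mul_cexp (a x) t k).le)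

theorem integrable_cexp_I_mul_sub_one (ha : Measurable a) (h1 : Integrable (fun x => |a x|) μ)
    (t : ℝ) : Integrable (fun x => cexp (I * a x * t) - 1) μ :=
  (h1.mul_const |t|).mono' (by fun_prop : Measurable _).aestronglyMeasurable
    (ae_of_all _ fun x => norm_cexp_I_mul_ofReal_mul_sub_one_le (a x) t)

theorem hasDerivAt_integral_I_mul_pow_mul_cexp_sub (ha : Measurable a) (k : ℕ) (c : ℂ) (t : ℝ)
    (hint : Integrable (fun x => (I * a x) ^ k * cexp (I * a x * t) - c) μ)
    (hk : Integrable (fun x => |a x| ^ (k + 1)) μ) :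
    HasDerivAt (fun t : ℝ => ∫ x, ((I * a x) ^ k * cexp (I * a x * t) - c) ∂μ)
      (∫ x, (I * a x) ^ (k + 1) * cexp (I * a x * t) ∂μ) t :=
  (hasDerivAt_integral_of_dominated_loc_of_deriv_le (Metric.ball_mem_nhds t one_pos)
    (Eventually.of_forall fun _ => (by fun_prop : Measurable _).aestronglyMeasurable) hint
    (by fun_prop : Measurable _).aestronglyMeasurable
    (ae_of_all _ fun x s _ => (norm_I_mul_ofReal_pow_mul_cexp (a x) s (k + 1)).le) hk
    (ae_of_all _ fun x s _ => hasDerivAt_I_mul_ofReal_pow_mul_cexp_sub (a x) k c s)).2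

theorem hasDerivAt_integral_cexp_I_mul_sub_one (ha : Measurable a)
    (h1 : Integrable (fun x => |a x|) μ) (t : ℝ) :
    HasDerivAt (fun t : ℝ => ∫ x, (cexp (I * a x * t) - 1) ∂μ)
      (∫ x, (I * a x) ^ 1 * cexp (I * a x * t) ∂μ) t := by
  simpa using hasDerivAt_integral_I_mul_pow_mul_cexp_sub ha 0 1 t
    (by simpa using integrable_cexp_I_mul_sub_one ha h1 t) (by simpa using h1)

theorem hasDerivAt_integral_I_mul_pow_mul_cexp (ha : Measurable a) {k : ℕ}
    (hk : Integrable (fun x => |a x| ^ k) μ) (hk' : Integrable (fun x => |a x| ^ (k + 1)) μ)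
    (t : ℝ) :
    HasDerivAt (fun t : ℝ => ∫ x, (I * a x) ^ k * cexp (I * a x * t) ∂μ)
      (∫ x, (I * a x) ^ (k + 1) * cexp (I * a x * t) ∂μ) t := by
  simpa using hasDerivAt_integral_I_mul_pow_mul_cexp_sub ha k 0 t
    (by simpa using integrable_I_mul_pow_mul_cexp ha hk t) hk'

variable (ha : Measurable a) (hmom : ∀ k, Integrable (fun x => |a x| ^ (k + 1)) μ)
include ha hmom

theorem deriv_integral_cexp_I_mul_sub_one :
    deriv (fun t : ℝ => ∫ x, (cexp (I * a x * t) - 1) ∂μ) =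
      fun t : ℝ => ∫ x, (I * a x) ^ 1 * cexp (I * a x * t) ∂μ :=
  funext fun t => (hasDerivAt_integral_cexp_I_mul_sub_one ha (by simpa using hmom 0) t).deriv

theorem contDiff_integral_cexp_I_mul_sub_one :
    ContDiff ℝ ∞ (fun t : ℝ => ∫ x, (cexp (I * a x * t) - 1) ∂μ) := by
  refine contDiff_infty_iff_deriv.2 ⟨fun t => (hasDerivAt_integral_cexp_I_mul_sub_one ha
    (by simpa using hmom 0) t).differentiableAt, ?_⟩
  rw [deriv_integral_cexp_I_mul_sub_one ha hmom]
  exact contDiff_of_hasDerivAt_succ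
    (f := fun k (t : ℝ) => ∫ x, (I * a x) ^ (k + 1) * cexp (I * a x * t) ∂μ)
    fun k => hasDerivAt_integral_I_mul_pow_mul_cexp ha (hmom k) (hmom (k + 1))

theorem iteratedDeriv_succ_integral_cexp_I_mul_sub_one (k : ℕ) :
    iteratedDeriv (k + 1) (fun t : ℝ => ∫ x, (cexp (I * a x * t) - 1) ∂μ) =
      fun t : ℝ => ∫ x, (I * a x) ^ (k + 1) * cexp (I * a x * t) ∂μ := by
  rw [iteratedDeriv_succ', deriv_integral_cexp_I_mul_sub_one ha hmom]
  exact iteratedDeriv_eq_of_hasDerivAt_succ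
    (f := fun k (t : ℝ) => ∫ x, (I * a x) ^ (k + 1) * cexp (I * a x * t) ∂μ)
    (fun k => hasDerivAt_integral_I_mul_pow_mul_cexp ha (hmom k) (hmom (k + 1))) k

end IntegralCexp

theorem SchwartzMap.integrable_abs_pow {E : Type*} [NormedAddCommGroup E] [NormedSpace ℝ E]
    [MeasurableSpace E] [BorelSpace E] [SecondCountableTopology E] (μ : Measure E)
    [μ.HasTemperateGrowth] (g : SchwartzMap E ℝ) {k : ℕ} (hk : k ≠ 0) :
    Integrable (fun x => |g x| ^ k) μ :=
  (g.memLp k μ).integrable_norm_pow hk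

section Smearing

variable {E : Type*} [MeasurableSpace E] {ν : Measure E} {g : E → ℝ} {r : Measure ℝ}

theorem integral_prod_I_mul_mul_pow [SFinite ν] [SFinite r] (n : ℕ) :
    ∫ p : E × ℝ, (I * ↑(p.2 * g p.1)) ^ n ∂ν.prod r =
      I ^ n * ((∫ s, s ^ n ∂r : ℝ) : ℂ) * ((∫ x, g x ^ n ∂ν : ℝ) : ℂ) := by
  have hfactor : ∀ p : E × ℝ, (I * ↑(p.2 * g p.1)) ^ n =
      I ^ n * (((g p.1 ^ n : ℝ) : ℂ) * ((p.2 ^ n : ℝ) : ℂ)) := fun p => by push_cast; ring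
  simp_rw [hfactor]
  rw [integral_const_mul,
    integral_prod_mul (fun x => ((g x ^ n : ℝ) : ℂ)) (fun s => ((s ^ n : ℝ) : ℂ)),
    integral_complex_ofReal, integral_complex_ofReal]
  ring

theorem integral_levyChar_mul [SFinite ν] [SFinite r] (hg : Measurable g)
    (hg1 : Integrable g ν) (hg2 : Integrable (fun x => g x ^ 2) ν)
    (hr : Integrable (fun s => |s|) r) (b σ2 lam t : ℝ) :
    ∫ x, levyChar b σ2 lam r (t * g x) ∂ν =
      t • (I * b * ∫ x, (g x : ℂ) ∂ν) + t ^ 2 • (-(σ2 / 2 : ℂ) * ∫ x, (g x : ℂ) ^ 2 ∂ν)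
        + lam * ∫ p : E × ℝ, (cexp (I * ↑(p.2 * g p.1) * t) - 1) ∂ν.prod r := by
  have hpt : ∀ x, levyChar b σ2 lam r (t * g x) =
      t • (I * b * g x) + t ^ 2 • (-(σ2 / 2 : ℂ) * (g x : ℂ) ^ 2)
        + lam * ∫ s, (cexp (I * ↑(s * g x) * t) - 1) ∂r := by
    intro x
    have harg : ∀ s : ℝ, I * s * ↑(t * g x) = I * ↑(s * g x) * t := fun s => by push_cast; ring
    simp_rw [levyChar, harg, Complex.real_smul]
    push_cast
    ring
  have hjump : Integrable (fun p : E × ℝ => cexp (I * ↑(p.2 * g p.1) * t) - 1) (ν.prod r) :=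
    integrable_cexp_I_mul_sub_one (a := fun p : E × ℝ => p.2 * g p.1) (by fun_prop)
      ((hg1.norm.mul_prod hr).congr (ae_of_all _ fun p => by simp [abs_mul, mul_comm])) t
  have hlin : Integrable (fun x => t • (I * b * (g x : ℂ))) ν :=
    (hg1.ofReal.const_mul _).smul t
  have hquad : Integrable (fun x => t ^ 2 • (-(σ2 / 2 : ℂ) * (g x : ℂ) ^ 2)) ν :=
    ((hg2.ofReal.const_mul _).smul (t ^ 2)).congr (ae_of_all _ fun x => by push_cast; rfl)
  simp_rw [hpt]
  rw [integral_add (hlin.fun_add hquad) (hjump.integral_prod_left.const_mul _),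
    integral_add hlin hquad, integral_smul, integral_smul, integral_const_mul,
    integral_const_mul, integral_const_mul, integral_prod _ hjump]

end Smearing

theorem nth_derivative_of_smeared_levyChar_is_cumulant_general
    (b σ2 lam : ℝ)
    (r : Measure ℝ) [IsProbabilityMeasure r]
    (hmom : ∀ n : ℕ, Integrable (fun s : ℝ => |s| ^ n) r)
    (d : ℕ)
    (g : SchwartzMap (EuclideanSpace ℝ (Fin d)) ℝ)
    (n : ℕ) (hn : 3 ≤ n) :
    (∀ k : ℕ, k < n →
      Differentiable ℝ (iteratedDeriv k
        (fun t : ℝ => ∫ x, levyChar b σ2 lam r (t * g x)))) ∧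
    iteratedDeriv n (fun t : ℝ => ∫ x, levyChar b σ2 lam r (t * g x)) 0 =
      Complex.I ^ n * (lam : ℂ) * ((∫ s : ℝ, s ^ n ∂r : ℝ) : ℂ) *
        ((∫ x, g x ^ n : ℝ) : ℂ) := by
  set Φ := fun t : ℝ => ∫ p : EuclideanSpace ℝ (Fin d) × ℝ,
    (cexp (I * ↑(p.2 * g p.1) * t) - 1) ∂volume.prod r
  have hjump_mom : ∀ k, Integrable (fun p : EuclideanSpace ℝ (Fin d) × ℝ =>
      |p.2 * g p.1| ^ (k + 1)) (volume.prod r) := fun k =>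
    ((g.integrable_abs_pow volume k.succ_ne_zero).mul_prod (hmom (k + 1))).congr
      (ae_of_all _ fun p => by simp only [abs_mul, mul_pow, mul_comm])
  obtain ⟨α, β, hsplit⟩ : ∃ α β : ℂ, (fun t : ℝ => ∫ x, levyChar b σ2 lam r (t * g x)) =
      fun t => t • α + t ^ 2 • β + lam * Φ t :=
    ⟨_, _, funext fun t => integral_levyChar_mul g.continuous.measurable g.integrable
      (by simpa using g.integrable_abs_pow volume two_ne_zero) (by simpa using hmom 1) b σ2 lam t⟩
  have hΦ : ContDiff ℝ ∞ Φ := contDiff_integral_cexp_I_mul_sub_one (by fun_prop) hjump_mom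
  have hpoly : ContDiff ℝ ∞ fun t : ℝ => t • α + t ^ 2 • β := by fun_prop
  have hlamΦ : ContDiff ℝ ∞ fun t => (lam : ℂ) * Φ t := contDiff_const.mul hΦ
  rw [hsplit]
  refine ⟨fun k _ => (hpoly.add hlamΦ).differentiable_iteratedDeriv k
    (mod_cast ENat.natCast_lt_top k), ?_⟩
  obtain ⟨m, rfl⟩ : ∃ m, n = m + 1 := ⟨n - 1, by omega⟩
  rw [iteratedDeriv_fun_add (contDiff_infty.1 hpoly _).contDiffAt
      (contDiff_infty.1 hlamΦ _).contDiffAt, iteratedDeriv_smul_add_sq_smul_eq_zero α β hn,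
    iteratedDeriv_const_mul _ (contDiff_infty.1 hΦ _).contDiffAt,
    iteratedDeriv_succ_integral_cexp_I_mul_sub_one (by fun_prop) hjump_mom]
  simp only [Complex.ofReal_zero, mul_zero, Complex.exp_zero, mul_one, Pi.zero_apply, zero_add]
  rw [integral_prod_I_mul_mul_pow]
  ring

theorem nth_derivative_of_smeared_levyChar_is_cumulant
    (b σ2 lam : ℝ) (hσ : 0 ≤ σ2) (hlam : 0 ≤ lam)
    (r : Measure ℝ) [IsProbabilityMeasure r] (hr0 : r {0} = 0)
    (hmom : ∀ n : ℕ, Integrable (fun s : ℝ => |s| ^ n) r)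
    (d : ℕ) (hd : 1 ≤ d)
    (g : SchwartzMap (EuclideanSpace ℝ (Fin d)) ℝ)
    (n : ℕ) (hn : 3 ≤ n) :
    (∀ k : ℕ, k < n →
      Differentiable ℝ (iteratedDeriv k
        (fun t : ℝ => ∫ x, levyChar b σ2 lam r (t * g x)))) ∧
    iteratedDeriv n (fun t : ℝ => ∫ x, levyChar b σ2 lam r (t * g x)) 0 =
      Complex.I ^ n * (lam : ℂ) * ((∫ s : ℝ, s ^ n ∂r : ℝ) : ℂ) *
        ((∫ x, g x ^ n : ℝ) : ℂ) :=
  nth_derivative_of_smeared_levyChar_is_cumulant_general b σ2 lam r hmom d g n hn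
end

section
/- Let d ≥ 1, n ≥ 2, 1 ≤ p ≤ n − 1, let g_1, …, g_n be Schwartz functions on ℝ^d, and let a ∈ ℝ^d with a ≠ 0. Then lim_{t → ∞} ∫_{ℝ^d} ∏_{j=1}^p g_j(y) · ∏_{j=p+1}^n g_j(y − t·a) dy = 0. In particular, the truncated Schwinger functions S_n^T(f_1, …, f_p, τ_{ta} f_{p+1}, …, τ_{ta} f_n) of the convoluted generalized white noise model tend to zero as t → ∞ (the cluster property of the cumulants). -/
/-!
Every factor is bounded, and an unshifted factor is integrable, so the integrands are dominated
uniformly in `t` by an integrable function. Pointwise in `y`, a shifted factor `g_j (y - t • a)`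
tends to `0` because `y - t • a` leaves every compact set, so the integrals tend to `0` by
dominated convergence.
-/

open MeasureTheory Filter Topology
open Bornology Finset ZeroAtInfty

theorem tendsto_smul_const_cobounded {𝕜 E : Type*} [NormedField 𝕜] [NormedAddCommGroup E]
    [NormedSpace 𝕜 E] {a : E} (ha : a ≠ 0) :
    Tendsto (· • a) (cobounded 𝕜) (cobounded E) := by
  rw [← tendsto_norm_atTop_iff_cobounded]
  simp_rw [norm_smul]
  exact tendsto_norm_cobounded_atTop.atTop_mul_const (norm_pos_iff.2 ha)

namespace ZeroAtInftyContinuousMap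

variable {ι E 𝕜 α : Type*} [RCLike 𝕜] [TopologicalSpace E] [Fintype ι]

theorem norm_apply_le (f : C₀(E, 𝕜)) (x : E) : ‖f x‖ ≤ ‖f‖ :=
  norm_toBCF_eq_norm (f := f) ▸ f.toBCF.norm_coe_le_norm x

theorem norm_prod_apply_le [DecidableEq ι] (f : ι → C₀(E, 𝕜)) (x : ι → E) (i₀ : ι) :
    ‖∏ j, f j (x j)‖ ≤ ‖f i₀ (x i₀)‖ * ∏ j ∈ univ.erase i₀, ‖f j‖ := by
  rw [norm_prod, ← mul_prod_erase _ _ (mem_univ i₀)]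
  gcongr with j
  exact norm_apply_le (f j) (x j)

variable [AddGroup E] [IsTopologicalAddGroup E] {l : Filter α} {v : α → E}

theorem tendsto_apply_sub_of_tendsto_cocompact (f : C₀(E, 𝕜)) (hv : Tendsto v l (cocompact E))
    (y : E) : Tendsto (fun t => f (y - v t)) l (𝓝 0) := by
  have hsub : Tendsto (y - ·) (cocompact E) (cocompact E) := (Homeomorph.subLeft y).map_cocompact.le
  exact (zero_at_infty f).comp (hsub.comp hv)

variable (f : ι → C₀(E, 𝕜)) (P : ι → Prop) [DecidablePred P]

theorem tendsto_prod_apply_partial_shift (hv : Tendsto v l (cocompact E)) {i₁ : ι} (hi₁ : ¬ P i₁)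
    (y : E) : Tendsto (fun t => ∏ j, f j (if P j then y else y - v t)) l (𝓝 0) := by
  have hlim : Tendsto (fun t => ∏ j, f j (if P j then y else y - v t)) l
      (𝓝 (∏ j, if P j then f j y else 0)) := by
    refine tendsto_finsetProd _ fun j _ => ?_
    by_cases hj : P j
    · simpa only [hj, if_true] using tendsto_const_nhds
    · simpa only [hj, if_false] using tendsto_apply_sub_of_tendsto_cocompact (f j) hv y
  rwa [prod_eq_zero (mem_univ i₁) (if_neg hi₁)] at hlim

theorem tendsto_integral_prod_apply_partial_shift [MeasurableSpace E] [OpensMeasurableSpace E]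
    {μ : Measure E} [l.IsCountablyGenerated] (hv : Tendsto v l (cocompact E)) {i₀ i₁ : ι}
    (hi₀ : P i₀) (hi₁ : ¬ P i₁) (hint : Integrable (f i₀) μ) :
    Tendsto (fun t => ∫ y, ∏ j, f j (if P j then y else y - v t) ∂μ) l (𝓝 0) := by
  classical
  rw [← integral_zero E 𝕜]
  refine tendsto_integral_filter_of_dominated_convergence
    (fun y => ‖f i₀ y‖ * ∏ j ∈ univ.erase i₀, ‖f j‖) (.of_forall fun t => ?_)
    (.of_forall fun t => .of_forall fun y => ?_) (hint.norm.mul_const _)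
    (.of_forall (tendsto_prod_apply_partial_shift f P hv hi₁))
  · refine (continuous_finsetProd _ fun j _ => (f j).continuous.comp ?_).aestronglyMeasurable
    exact continuous_if_const _ (fun _ => continuous_id) fun _ => continuous_id.sub continuous_const
  · simpa only [hi₀, if_true] using norm_prod_apply_le f (fun j => if P j then y else y - v t) i₀

end ZeroAtInftyContinuousMap

theorem cluster_property_of_cumulants_general
    (d n p : ℕ) (hp1 : 1 ≤ p) (hp2 : p ≤ n - 1)
    (g : Fin n → SchwartzMap (EuclideanSpace ℝ (Fin d)) ℂ)
    (a : EuclideanSpace ℝ (Fin d)) (ha : a ≠ 0) :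
    Tendsto
      (fun t : ℝ => ∫ y : EuclideanSpace ℝ (Fin d),
        ∏ j : Fin n, g j (if (j : ℕ) < p then y else y - t • a))
      atTop (𝓝 0) := by
  have hv : Tendsto (· • a) atTop (cocompact (EuclideanSpace ℝ (Fin d))) :=
    Metric.cobounded_eq_cocompact (α := EuclideanSpace ℝ (Fin d)) ▸
      (tendsto_smul_const_cobounded ha).comp (IsOrderBornology.atTop_le_cobounded (α := ℝ))
  have hshift := ZeroAtInftyContinuousMap.tendsto_integral_prod_apply_partial_shift
    (fun j => (g j).toZeroAtInfty) (fun j : Fin n => (j : ℕ) < p) hv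
    (i₀ := ⟨0, by omega⟩) (i₁ := ⟨p, by omega⟩) hp1 (lt_irrefl p) ((g _).integrable (μ := volume))
  simpa only [SchwartzMap.toZeroAtInfty_apply] using hshift

theorem cluster_property_of_cumulants
    (d n p : ℕ) (hd : 1 ≤ d) (hn : 2 ≤ n) (hp1 : 1 ≤ p) (hp2 : p ≤ n - 1)
    (g : Fin n → SchwartzMap (EuclideanSpace ℝ (Fin d)) ℂ)
    (a : EuclideanSpace ℝ (Fin d)) (ha : a ≠ 0) :
    Tendsto
      (fun t : ℝ => ∫ y : EuclideanSpace ℝ (Fin d),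
        ∏ j : Fin n, g j (if (j : ℕ) < p then y else y - t • a))
      atTop (𝓝 0) :=
  cluster_property_of_cumulants_general d n p hp1 hp2 g a ha
end
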